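/- arXiv:1108.4090 — 3 statements merged into one kernel-verified Lean document; each statement's English description precedes it below -/
import Mathlib

section
/- Let 0 ≤ α < 1, let b be a real number, and set a = 1 - 2α. Define h(z) = b·(1 + a z)/(1 - z) + (1 - a)z/(1 - z)² for z in the unit disk. Then for z = e^{iθ} with -π ≤ θ ≤ π, θ ≠ 0, the real part of h(e^{iθ}) equals b·α - ((1-α)/2)·(1/sin²(θ/2)), and hence sup over the boundary (excluding z = 1) of Re h(e^{iθ}) equals (2bα - (1-α))/2, attained at θ = π. -/
open Complex


lemma key (α b a : ℝ) (ha : a = 1 - 2 * α) (θ : ℝ) (hc : Real.cos θ ≠ 1) :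
    (((b : ℂ) * (1 + (a : ℂ) * Complex.exp ((θ : ℂ) * Complex.I)) / (1 - Complex.exp ((θ : ℂ) * Complex.I))
        + 2 * ((1 : ℂ) - α) * Complex.exp ((θ : ℂ) * Complex.I) / (1 - Complex.exp ((θ : ℂ) * Complex.I)) ^ 2)).re
      = b * α - (1 - α) / (1 - Real.cos θ) := by
  subst ha
  set c := Real.cos θ with hcdef
  set s := Real.sin θ with hsdef
  have hz : Complex.exp ((θ : ℂ) * Complex.I) = (c : ℂ) + (s : ℂ) * I := by
    rw [Complex.exp_mul_I, Complex.ofReal_cos, Complex.ofReal_sin]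
  have hsc : s ^ 2 + c ^ 2 = 1 := Real.sin_sq_add_cos_sq θ
  have hcne : (1 : ℝ) - c ≠ 0 := by intro hh; apply hc; linarith
  rw [hz]
  simp only [Complex.div_re, Complex.add_re, Complex.add_im, Complex.mul_re, Complex.mul_im,
    Complex.normSq_apply, Complex.one_re, Complex.one_im, Complex.I_re, Complex.I_im,
    Complex.ofReal_re, Complex.ofReal_im, Complex.sub_re, Complex.sub_im,
    pow_two, Complex.re_ofNat, Complex.im_ofNat]
  ring_nf
  have hs4 : s ^ 4 = (1 - c ^ 2) ^ 2 := by nlinarith [hsc]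
  have hs2 : s ^ 2 = 1 - c ^ 2 := by nlinarith [hsc]
  rw [hs4, hs2]
  have e1 : (2:ℝ) - c * 2 ≠ 0 := by intro hh; apply hcne; linarith
  ring_nf
  rw [show (4:ℝ) - c * 8 + c ^ 2 * 4 = (2 - c * 2) ^ 2 by ring]
  field_simp
  ring

theorem stmt_6 (α b : ℝ) (hα0 : 0 ≤ α) (hα1 : α < 1) (a : ℝ) (ha : a = 1 - 2 * α)
    (h : ℂ → ℂ)
    (hh : h = fun z => (b : ℂ) * (1 + (a : ℂ) * z) / (1 - z)
        + 2 * ((1 : ℂ) - α) * z / (1 - z) ^ 2) :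
    (∀ θ : ℝ, θ ∈ Set.Icc (-Real.pi) Real.pi → θ ≠ 0 →
      (h (Complex.exp ((θ : ℂ) * Complex.I))).re
        = b * α - ((1 - α) / 2) * (1 / Real.sin (θ / 2) ^ 2) ∧
      (h (Complex.exp ((θ : ℂ) * Complex.I))).re ≤ (2 * b * α - (1 - α)) / 2) ∧
    (h (Complex.exp ((Real.pi : ℂ) * Complex.I))).re = (2 * b * α - (1 - α)) / 2 := by
  have main : ∀ θ : ℝ, θ ∈ Set.Icc (-Real.pi) Real.pi → θ ≠ 0 →
      (h (Complex.exp ((θ : ℂ) * Complex.I))).re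
        = b * α - ((1 - α) / 2) * (1 / Real.sin (θ / 2) ^ 2) ∧
      (h (Complex.exp ((θ : ℂ) * Complex.I))).re ≤ (2 * b * α - (1 - α)) / 2 := by
    intro θ hθ hθ0
    have hs0 : Real.sin (θ / 2) ≠ 0 := by
      intro hsz
      have h2 := (Real.sin_eq_zero_iff_of_lt_of_lt
        (x := θ / 2) (by nlinarith [hθ.1, Real.pi_pos])
        (by nlinarith [hθ.2, Real.pi_pos])).mp hsz
      exact hθ0 (by linarith)
    have hssq : Real.sin (θ / 2) ^ 2 = (1 - Real.cos θ) / 2 := by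
      have := Real.sin_sq_eq_half_sub (θ / 2)
      rw [this]; rw [show 2 * (θ / 2) = θ by ring]; ring
    have hspos : 0 < Real.sin (θ / 2) ^ 2 := by positivity
    have hsle : Real.sin (θ / 2) ^ 2 ≤ 1 := Real.sin_sq_le_one _
    have hcne : Real.cos θ ≠ 1 := by
      intro hh2; rw [hh2] at hssq; simp at hssq; exact hs0 (by nlinarith [hssq])
    have hre : (h (Complex.exp ((θ : ℂ) * Complex.I))).re
        = b * α - (1 - α) / (1 - Real.cos θ) := by
      rw [hh]; exact key α b a ha θ hcne
    have heq : (h (Complex.exp ((θ : ℂ) * Complex.I))).re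
        = b * α - ((1 - α) / 2) * (1 / Real.sin (θ / 2) ^ 2) := by
      rw [hre, hssq]
      have h1c : (1 : ℝ) - Real.cos θ ≠ 0 := fun hh2 => hcne (by linarith)
      field_simp
    refine ⟨heq, ?_⟩
    rw [heq]
    have h1 : 1 ≤ 1 / Real.sin (θ / 2) ^ 2 := by
      rw [le_div_iff₀ hspos]; linarith
    nlinarith [h1]
  refine ⟨main, ?_⟩
  obtain ⟨heq, -⟩ := main Real.pi ⟨by linarith [Real.pi_pos], le_refl _⟩
    (ne_of_gt Real.pi_pos)
  rw [heq, Real.sin_pi_div_two]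
  ring
end

section
/- Let a, b ∈ ℝ and define h(z) = (b + (1 + a - b + ab)z - ab z²)/(1 - z)². For z = e^{iθ} with -π < θ < π, θ ≠ 0, writing h(e^{iθ}) = u(θ) + i v(θ), one has u(θ) = ((1 + a - b + ab) + (1 - a)b cos θ)/(2(cos θ - 1)) and v(θ) = (1 + a)b sin θ/(2(1 - cos θ)), and these satisfy the parabola equation v² = -b²(1+a)·(u - (2b(1-a) - (a+1))/4). -/
open Complex

/-!
On the unit circle `(1 - z)² = z (z⁻¹ - 2 + z) = 2 z (cos θ - 1)` and the numerator of `h` is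
`z (b z⁻¹ + (1 + a - b + ab) - ab z)`, so after cancelling `z` the value `h(e^{iθ})` is an explicit
complex number divided by the real number `2 (cos θ - 1)`, which gives `u` and `v`. For the
parabola, `u - (2b(1 - a) - (1 + a))/4 = (1 + a)(1 + cos θ) / (4 (cos θ - 1))` and
`sin² θ = (1 - cos θ)(1 + cos θ)`.
-/

theorem Complex.exp_mul_I_mul_exp_neg_mul_I (θ : ℂ) : exp (θ * I) * exp (-θ * I) = 1 := by
  rw [← exp_add]; simp

theorem Complex.one_sub_exp_mul_I_sq (θ : ℝ) :
    (1 - exp (θ * I)) ^ 2 = exp (θ * I) * (2 * (Real.cos θ - 1)) := by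
  push_cast
  linear_combination -exp (θ * I) * two_cos (θ : ℂ) - exp_mul_I_mul_exp_neg_mul_I (θ : ℂ)

theorem Complex.quadratic_exp_mul_I (p q r θ : ℝ) :
    p + q * exp (θ * I) + r * exp (θ * I) ^ 2
      = exp (θ * I) * ((q + (p + r) * Real.cos θ : ℝ) + ((r - p) * Real.sin θ : ℝ) * I) := by
  have hneg : exp (-θ * I) = cos θ - sin θ * I := by
    rw [exp_mul_I, cos_neg, sin_neg]; ring
  push_cast
  linear_combination -p * exp_mul_I_mul_exp_neg_mul_I (θ : ℂ) + exp (θ * I) * p * hneg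
    + exp (θ * I) * r * exp_mul_I (θ : ℂ)

theorem Real.cos_ne_one_of_mem_Ioo {θ : ℝ} (hθ : θ ∈ Set.Ioo (-Real.pi) Real.pi) (hθ0 : θ ≠ 0) :
    cos θ ≠ 1 := fun h1 =>
  hθ0 <| (cos_eq_one_iff_of_lt_of_lt (by linarith [hθ.1, pi_pos])
    (by linarith [hθ.2, pi_pos])).mp h1

theorem boundary_value_eq (a b θ : ℝ) (hθ : Real.cos θ ≠ 1) :
    ((b : ℂ) + ((1 : ℂ) + a - b + a * b) * exp (θ * I) - (a : ℂ) * b * exp (θ * I) ^ 2)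
        / (1 - exp (θ * I)) ^ 2
      = (((1 + a - b + a * b) + (1 - a) * b * Real.cos θ) / (2 * (Real.cos θ - 1)) : ℝ)
        + ((1 + a) * b * Real.sin θ / (2 * (1 - Real.cos θ)) : ℝ) * I := by
  have hc : (Real.cos θ : ℂ) - 1 ≠ 0 := sub_ne_zero.mpr (by exact_mod_cast hθ)
  have hc' : (1 : ℂ) - Real.cos θ ≠ 0 := sub_ne_zero.mpr (by exact_mod_cast Ne.symm hθ)
  have hnum := quadratic_exp_mul_I b (1 + a - b + a * b) (-(a * b)) θ
  push_cast at hnum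
  rw [sub_eq_add_neg _ ((a : ℂ) * b * _), ← neg_mul, hnum, one_sub_exp_mul_I_sq,
    mul_div_mul_left _ _ (exp_ne_zero _)]
  push_cast at hc hc' ⊢
  field_simp
  ring

theorem boundary_parabola (a b c s : ℝ) (hcs : s ^ 2 + c ^ 2 = 1) (hc : c ≠ 1) :
    ((1 + a) * b * s / (2 * (1 - c))) ^ 2
      = -(b ^ 2) * (1 + a) * (((1 + a - b + a * b) + (1 - a) * b * c) / (2 * (c - 1))
        - (2 * b * (1 - a) - (a + 1)) / 4) := by
  have hc₁ : c - 1 ≠ 0 := sub_ne_zero.mpr hc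
  have hc₂ : 1 - c ≠ 0 := sub_ne_zero.mpr (Ne.symm hc)
  have hu : ((1 + a - b + a * b) + (1 - a) * b * c) / (2 * (c - 1))
      - (2 * b * (1 - a) - (a + 1)) / 4 = (1 + a) * (1 + c) / (4 * (c - 1)) := by
    field_simp; ring
  rw [hu, div_pow, mul_pow, mul_pow, show s ^ 2 = (1 - c) * (1 + c) by linear_combination hcs]
  field_simp
  ring

theorem stmt_7_general (a b : ℝ)
    (h : ℂ → ℂ)
    (hh : h = fun z => ((b : ℂ) + ((1 : ℂ) + a - b + a * b) * z - (a : ℂ) * b * z ^ 2)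
        / (1 - z) ^ 2) :
    ∀ θ ∈ Set.Ioo (-Real.pi) Real.pi, θ ≠ 0 →
      ∀ u v : ℝ,
        u = ((1 + a - b + a * b) + (1 - a) * b * Real.cos θ) / (2 * (Real.cos θ - 1)) →
        v = (1 + a) * b * Real.sin θ / (2 * (1 - Real.cos θ)) →
        (h (Complex.exp ((θ : ℂ) * Complex.I))).re = u ∧
        (h (Complex.exp ((θ : ℂ) * Complex.I))).im = v ∧
        v ^ 2 = -(b ^ 2) * (1 + a) * (u - (2 * b * (1 - a) - (a + 1)) / 4) := by
  rintro θ hθ hθ0 u v rfl rfl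
  have hc := Real.cos_ne_one_of_mem_Ioo hθ hθ0
  subst hh
  refine ⟨?_, ?_, boundary_parabola a b _ _ (Real.sin_sq_add_cos_sq θ) hc⟩ <;>
    simp only [boundary_value_eq a b θ hc, add_re, add_im, ofReal_re, ofReal_im, mul_re, mul_im,
      I_re, I_im] <;> ring

theorem stmt_7 (a b : ℝ) (ha : 0 < 1 + a)
    (h : ℂ → ℂ)
    (hh : h = fun z => ((b : ℂ) + ((1 : ℂ) + a - b + a * b) * z - (a : ℂ) * b * z ^ 2)
        / (1 - z) ^ 2) :
    ∀ θ ∈ Set.Ioo (-Real.pi) Real.pi, θ ≠ 0 →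
      ∀ u v : ℝ,
        u = ((1 + a - b + a * b) + (1 - a) * b * Real.cos θ) / (2 * (Real.cos θ - 1)) →
        v = (1 + a) * b * Real.sin θ / (2 * (1 - Real.cos θ)) →
        (h (Complex.exp ((θ : ℂ) * Complex.I))).re = u ∧
        (h (Complex.exp ((θ : ℂ) * Complex.I))).im = v ∧
        v ^ 2 = -(b ^ 2) * (1 + a) * (u - (2 * b * (1 - a) - (a + 1)) / 4) :=
  stmt_7_general a b h hh
end

section
/- Let 0 ≤ α < 1 and b ∈ ℝ with b > 0, a = 1 − 2α. The image under h(z) = b(1 + az)/(1 − z) + 2(1−α)z/(1−z)² of the open unit disk 𝕌 contains the half-plane {w ∈ ℂ : Re w > (2bα − (1 − α))/2}; equivalently, the complement of h(𝕌) lies in {w ∈ ℂ : Re w ≤ (2bα − (1−α))/2}. -/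
set_option maxHeartbeats 1000000 in


theorem stmt_19 (α b : ℝ) (hα0 : 0 ≤ α) (hα1 : α < 1) (hb : 0 < b)
    (a : ℝ) (ha : a = 1 - 2 * α)
    (h : ℂ → ℂ)
    (hh : h = fun z => (b : ℂ) * (1 + (a : ℂ) * z) / (1 - z)
        + 2 * ((1 : ℂ) - α) * z / (1 - z) ^ 2) :
    {w : ℂ | (2 * b * α - (1 - α)) / 2 < w.re} ⊆ h '' (Metric.ball 0 1) := by
  intro w hw
  simp only [Set.mem_setOf_eq] at hw
  obtain ⟨c, hc⟩ : ∃ c : ℝ, c = 2 * (1 - α) := ⟨_, rfl⟩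
  have hcpos : 0 < c := by rw [hc]; nlinarith
  obtain ⟨u, hu⟩ : ∃ u : ℝ, u = (w.re + a * b) / c + ((b - 1) / 2) ^ 2 := ⟨_, rfl⟩
  obtain ⟨v, hv⟩ : ∃ v : ℝ, v = w.im / c := ⟨_, rfl⟩
  have huc : u * c = w.re + a * b + ((b - 1) / 2) ^ 2 * c := by
    rw [hu]; field_simp
  have hvc : v * c = w.im := by rw [hv]; field_simp
  -- u > b^2/4
  have hub : b ^ 2 / 4 < u := by
    have h1 : (2 * b - 1) / 4 * c < w.re + a * b := by
      rw [hc, ha]; nlinarith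
    have h2 : (2 * b - 1) / 4 < (w.re + a * b) / c := (lt_div_iff₀ hcpos).mpr h1
    rw [hu]; nlinarith
  have hupos : 0 < u := lt_trans (by positivity) hub
  obtain ⟨r, hrdef⟩ : ∃ r : ℝ, r = Real.sqrt (u ^ 2 + v ^ 2) := ⟨_, rfl⟩
  have hr2 : r ^ 2 = u ^ 2 + v ^ 2 := by rw [hrdef]; exact Real.sq_sqrt (by positivity)
  have hru : u ≤ r := by
    have h3 : Real.sqrt (u ^ 2) ≤ Real.sqrt (u ^ 2 + v ^ 2) :=
      Real.sqrt_le_sqrt (by nlinarith)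
    rw [Real.sqrt_sq hupos.le] at h3
    rw [hrdef]; exact h3
  have hrupos : 0 < (r + u) / 2 := by linarith
  obtain ⟨x, hxdef⟩ : ∃ x : ℝ, x = Real.sqrt ((r + u) / 2) := ⟨_, rfl⟩
  have hx2 : x ^ 2 = (r + u) / 2 := by rw [hxdef]; exact Real.sq_sqrt hrupos.le
  have hxnn : 0 ≤ x := by rw [hxdef]; exact Real.sqrt_nonneg _
  have hxb : b / 2 < x := by
    have h4 : (b / 2) ^ 2 < x ^ 2 := by rw [hx2]; nlinarith
    nlinarith
  have hxpos : 0 < x := lt_trans (by positivity) hxb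
  have hxne : x ≠ 0 := hxpos.ne'
  obtain ⟨y, hy⟩ : ∃ y : ℝ, y = v / (2 * x) := ⟨_, rfl⟩
  have h4 : 2 * x * y = v := by rw [hy]; field_simp
  have h6 : 4 * x ^ 2 * y ^ 2 = v ^ 2 := by linear_combination (2 * x * y + v) * h4
  have hxy : x ^ 2 - y ^ 2 = u := by
    have h5 : 4 * x ^ 2 * (x ^ 2 - y ^ 2) = 4 * x ^ 2 * u := by
      linear_combination (4 * x ^ 2 + 2 * (r - u)) * hx2 - h6 + hr2
    have h7 : (4 : ℝ) * x ^ 2 ≠ 0 := by positivity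
    exact mul_left_cancel₀ h7 h5
  -- define t
  obtain ⟨t, htdef⟩ : ∃ t : ℂ,
      t = ((x : ℂ) + (y : ℂ) * Complex.I) - ((b : ℂ) - 1) / 2 := ⟨_, rfl⟩
  have htre : t.re = x - (b - 1) / 2 := by simp [htdef]
  have htim : t.im = y := by simp [htdef]
  have htre2 : 1 / 2 < t.re := by rw [htre]; linarith
  have htne : t ≠ 0 := by
    intro h0
    rw [h0, Complex.zero_re] at htre2; linarith
  -- key equation
  have hs2 : ((x : ℂ) + (y : ℂ) * Complex.I) ^ 2 = (u : ℂ) + (v : ℂ) * Complex.I := by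
    have hxyC : ((x : ℂ)) ^ 2 - ((y : ℂ)) ^ 2 = (u : ℂ) := by exact_mod_cast hxy
    have h4C : 2 * (x : ℂ) * (y : ℂ) = (v : ℂ) := by exact_mod_cast h4
    linear_combination hxyC + Complex.I * h4C + ((y : ℂ)) ^ 2 * Complex.I_sq
  have hucC : (u : ℂ) * (c : ℂ)
      = (w.re : ℂ) + (a : ℂ) * (b : ℂ) + (((b : ℂ) - 1) / 2) ^ 2 * (c : ℂ) := by
    have := huc
    push_cast
    exact_mod_cast congrArg (fun x : ℝ => (x : ℂ)) huc
  have hvcC : (v : ℂ) * (c : ℂ) = (w.im : ℂ) := by exact_mod_cast hvc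
  have hwri : (w.re : ℂ) + (w.im : ℂ) * Complex.I = w := Complex.re_add_im w
  have key : (c : ℂ) * (t ^ 2 + ((b : ℂ) - 1) * t) - (a : ℂ) * (b : ℂ) = w := by
    rw [htdef]
    linear_combination (c : ℂ) * hs2 + hucC + Complex.I * hvcC + hwri
  -- define z
  obtain ⟨z, hz⟩ : ∃ z : ℂ, z = 1 - 1 / t := ⟨_, rfl⟩
  have h1z : (1 : ℂ) - z = 1 / t := by rw [hz]; ring
  refine ⟨z, ?_, ?_⟩
  · rw [Metric.mem_ball, dist_zero_right]
    have hns : Complex.normSq (t - 1) < Complex.normSq t := by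
      simp only [Complex.normSq_apply, Complex.sub_re, Complex.sub_im, Complex.one_re,
        Complex.one_im]
      nlinarith [htre2, sq_nonneg t.im]
    have habs : ‖t - 1‖ < ‖t‖ := by
      rw [Complex.norm_def, Complex.norm_def]
      exact Real.sqrt_lt_sqrt (Complex.normSq_nonneg _) hns
    have hzeq : z = (t - 1) / t := by rw [hz]; field_simp
    rw [hzeq, norm_div, div_lt_one (norm_pos_iff.mpr htne)]
    exact habs
  · rw [hh]
    simp only
    rw [h1z]
    have haC : (a : ℂ) = 1 - 2 * (α : ℂ) := by rw [ha]; push_cast; ring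
    have hcC : ((c : ℝ) : ℂ) = 2 * (1 - (α : ℂ)) := by rw [hc]; push_cast; ring
    rw [hcC] at key
    have hz1 : z = (t - 1) / t := by rw [hz]; field_simp
    rw [hz1]
    field_simp
    linear_combination key + (b : ℂ) * t * haC
end
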